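/- arXiv:2305.17292 — 3 statements merged into one kernel-verified Lean document; each statement's English description precedes it below -/
import Mathlib

section
/- In the group $G = \langle a, x \mid x^n = a^{-1} x^n a \rangle$ (with $n \geq 1$), the cyclic subgroup $H = \langle x^n \rangle$ is central, hence normal, and the quotient $G/H$ is isomorphic to the free product $\mathbb{Z} * C_n$, where $C_n$ is the cyclic group of order $n$. -/
/-!
The relator says exactly that `a` commutes with `x^n`, and `x` commutes with its own powers, so
`x^n` commutes with both generators and is central. Killing `x^n` leaves `⟨a, x ∣ x^n⟩`, the free
product `ℤ * C_n`: the map `a ↦ 1 ∈ ℤ`, `x ↦ 1 ∈ C_n` is onto and kills `x^n`, and by the universal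
property of the free product the quotient map `G → G/⟨x^n⟩` factors through it, so its kernel is
no larger than `⟨x^n⟩`.
-/

open Monoid.Coprod

/-- The relation set for the group `G = ⟨a, x ∣ x^n = a⁻¹ x^n a⟩`,
with `true ↦ a`, `false ↦ x`. -/
def auxRel (n : ℕ) : Set (FreeGroup Bool) :=
  {(FreeGroup.of false) ^ n *
    ((FreeGroup.of true)⁻¹ * (FreeGroup.of false) ^ n * FreeGroup.of true)⁻¹}

theorem Subgroup.normal_of_le_center {G : Type*} [Group G] {H : Subgroup G}
    (hH : H ≤ Subgroup.center G) : H.Normal :=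
  ⟨fun h hh g => by rwa [Subgroup.mem_center_iff.mp (hH hh) g, mul_inv_cancel_right]⟩

theorem MonoidHom.ker_eq_of_comp_eq_mk' {G K : Type*} [Group G] [Group K] {H : Subgroup G}
    [H.Normal] {π : G →* K} {ψ : K →* G ⧸ H} (hψ : ψ.comp π = QuotientGroup.mk' H)
    (hH : H ≤ π.ker) : π.ker = H := by
  refine le_antisymm ?_ hH
  calc π.ker ≤ ψ.ker.comap π := π.ker_le_comap ψ.ker
    _ = H := by rw [MonoidHom.comap_ker, hψ, QuotientGroup.ker_mk']

def zmodPowersHom {K : Type*} [Group K] {n : ℕ} (g : K) (hg : g ^ n = 1) :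
    Multiplicative (ZMod n) →* K :=
  (ZMod.lift n ⟨zmultiplesHom (Additive K) (Additive.ofMul g), by
    simp [← ofMul_pow, hg]⟩).toMultiplicativeLeft

@[simp]
theorem zmodPowersHom_ofAdd_one {K : Type*} [Group K] {n : ℕ} (g : K) (hg : g ^ n = 1) :
    zmodPowersHom g hg (Multiplicative.ofAdd 1) = g := by
  rw [zmodPowersHom, AddMonoidHom.toMultiplicativeLeft_apply_apply, toAdd_ofAdd,
    ← Int.cast_one, ZMod.lift_coe, zmultiplesHom_apply, one_zsmul]
  rfl

theorem Monoid.Coprod.inr_ofAdd_one_pow {M : Type*} [Monoid M] (n : ℕ) :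
    (inr (Multiplicative.ofAdd (1 : ZMod n)) : M ∗ Multiplicative (ZMod n)) ^ n = 1 := by
  rw [← map_pow, ← ofAdd_nsmul, nsmul_one, ZMod.natCast_self, ofAdd_zero, map_one]

namespace AuxRel

variable (n : ℕ)

theorem commute_of_true_of_false_pow :
    Commute (PresentedGroup.of true : PresentedGroup (auxRel n)) (PresentedGroup.of false ^ n) := by
  have h := PresentedGroup.mk_eq_mk_of_mul_inv_mem (Set.mem_singleton _ : _ ∈ auxRel n)
  simp only [map_mul, map_pow, map_inv] at h
  exact eq_inv_mul_iff_mul_eq.mp (h.trans (mul_assoc _ _ _))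

theorem of_false_pow_mem_center :
    (PresentedGroup.of false : PresentedGroup (auxRel n)) ^ n ∈ Subgroup.center _ :=
  Subgroup.mem_center_iff.mpr fun g => Subgroup.mem_centralizer_singleton_iff.mp <|
    PresentedGroup.generated_by _ _ (fun b => Subgroup.mem_centralizer_singleton_iff.mpr <|
      match b with
      | true => (commute_of_true_of_false_pow n).eq
      | false => ((Commute.refl _).pow_right n).eq) g

instance : (Subgroup.zpowers (PresentedGroup.of false ^ n : PresentedGroup (auxRel n))).Normal :=
  Subgroup.normal_of_le_center (Subgroup.zpowers_le.mpr (of_false_pow_mem_center n))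

def toCoprod : PresentedGroup (auxRel n) →* Multiplicative ℤ ∗ Multiplicative (ZMod n) :=
  PresentedGroup.toGroup (f := fun b => cond b (inl (.ofAdd 1)) (inr (.ofAdd 1))) <| by
    rintro _ rfl
    simp [inr_ofAdd_one_pow]

@[simp]
theorem toCoprod_of_true : toCoprod n (PresentedGroup.of true) = inl (.ofAdd 1) := rfl

@[simp]
theorem toCoprod_of_false : toCoprod n (PresentedGroup.of false) = inr (.ofAdd 1) := rfl

theorem toCoprod_of_false_pow : toCoprod n (PresentedGroup.of false ^ n) = 1 := by
  rw [map_pow, toCoprod_of_false, inr_ofAdd_one_pow]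

theorem toCoprod_surjective : Function.Surjective (toCoprod n) := by
  intro y
  induction y using Monoid.Coprod.induction_on with
  | inl k =>
    refine ⟨PresentedGroup.of true ^ k.toAdd, ?_⟩
    rw [map_zpow, toCoprod_of_true, ← map_zpow, ← ofAdd_zsmul, zsmul_one, Int.cast_id,
      ofAdd_toAdd]
  | inr k =>
    obtain ⟨m, hm⟩ := ZMod.intCast_surjective k.toAdd
    refine ⟨PresentedGroup.of false ^ m, ?_⟩
    rw [map_zpow, toCoprod_of_false, ← map_zpow, ← ofAdd_zsmul, zsmul_one, hm, ofAdd_toAdd]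
  | mul _ _ hu hv =>
    obtain ⟨u, rfl⟩ := hu
    obtain ⟨v, rfl⟩ := hv
    exact ⟨u * v, map_mul _ _ _⟩

def ofCoprod : Multiplicative ℤ ∗ Multiplicative (ZMod n) →*
    PresentedGroup (auxRel n) ⧸ Subgroup.zpowers (PresentedGroup.of false ^ n) :=
  lift (zpowersHom _ (PresentedGroup.of true : PresentedGroup (auxRel n)))
    (zmodPowersHom ((PresentedGroup.of false : PresentedGroup (auxRel n)) : _ ⧸ _) (by
      rw [← QuotientGroup.mk_pow, QuotientGroup.eq_one_iff]
      exact Subgroup.mem_zpowers _))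

theorem ofCoprod_comp_toCoprod :
    (ofCoprod n).comp (toCoprod n) = QuotientGroup.mk' _ :=
  PresentedGroup.ext fun b => by cases b <;> simp [ofCoprod]

end AuxRel

theorem aux_central_quotient_general (n : ℕ) :
    (Subgroup.zpowers ((PresentedGroup.of false : PresentedGroup (auxRel n)) ^ n)
        ≤ Subgroup.center (PresentedGroup (auxRel n))) ∧
    (Subgroup.zpowers ((PresentedGroup.of false : PresentedGroup (auxRel n)) ^ n)).Normal ∧
    ∃ π : PresentedGroup (auxRel n) →*
        Monoid.Coprod (Multiplicative ℤ) (Multiplicative (ZMod n)),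
      Function.Surjective π ∧
      π.ker = Subgroup.zpowers ((PresentedGroup.of false : PresentedGroup (auxRel n)) ^ n) :=
  ⟨Subgroup.zpowers_le.mpr (AuxRel.of_false_pow_mem_center n), inferInstance,
    AuxRel.toCoprod n, AuxRel.toCoprod_surjective n,
    MonoidHom.ker_eq_of_comp_eq_mk' (AuxRel.ofCoprod_comp_toCoprod n)
      (Subgroup.zpowers_le.mpr (AuxRel.toCoprod_of_false_pow n))⟩

/-- In `G = ⟨a, x ∣ x^n = a⁻¹ x^n a⟩` the cyclic subgroup `H = ⟨x^n⟩` is central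
(hence normal), and `G/H ≅ ℤ * C_n`: there is a surjective homomorphism from `G`
onto the free product `ℤ * C_n` with kernel exactly `H`. -/
theorem aux_central_quotient (n : ℕ) (hn : 1 ≤ n) :
    (Subgroup.zpowers ((PresentedGroup.of false : PresentedGroup (auxRel n)) ^ n)
        ≤ Subgroup.center (PresentedGroup (auxRel n))) ∧
    (Subgroup.zpowers ((PresentedGroup.of false : PresentedGroup (auxRel n)) ^ n)).Normal ∧
    ∃ π : PresentedGroup (auxRel n) →*
        Monoid.Coprod (Multiplicative ℤ) (Multiplicative (ZMod n)),
      Function.Surjective π ∧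
      π.ker = Subgroup.zpowers ((PresentedGroup.of false : PresentedGroup (auxRel n)) ^ n) :=
  aux_central_quotient_general n
end

section
/- The even dihedral Artin group $D_{2n} = \langle a, b \mid (ab)^n = (ba)^n \rangle$ contains a normal subgroup $N$ of index $n$ that is isomorphic to $\mathbb{F}_n \times \mathbb{Z}$, namely $N = \langle (ab)^n, a, (ab)a(ab)^{-1}, \dots, (ab)^{n-1} a (ab)^{-(n-1)} \rangle$, and $D_{2n}/N \cong C_n$. -/
/-!
Put `x = ab`. Since `ba = a⁻¹ x a`, the defining relation says exactly that `x ^ n` commutes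
with `a`, so `D_{2n}` is the universal group generated by such a pair `(x, a)`. The same holds
for `F(ℤ/n) ⋊ ℤ`, where the generator `t` of `ℤ` shifts the free basis `eᵢ ↦ eᵢ₊₁`, via
`t ↦ x`, `eᵢ ↦ xⁱ a x⁻ⁱ` (well defined on `ℤ/n` because `x ^ n` commutes with `a`); hence
the two groups are isomorphic, with `a ↦ e₀`, `ab ↦ t`. This isomorphism maps `N` onto the
preimage of `nℤ`, i.e. onto the kernel of the projection to `ℤ/n`. As `nℤ` acts trivially on
`F(ℤ/n)`, that preimage is the direct product `F(ℤ/n) × nℤ ≅ 𝔽_n × ℤ`.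
-/

/-- The relation set for the even dihedral Artin group
`D_{2n} = ⟨a, b ∣ (ab)^n = (ba)^n⟩`, with `true ↦ a`, `false ↦ b`. -/
def dihedralRel (n : ℕ) : Set (FreeGroup Bool) :=
  {(FreeGroup.of true * FreeGroup.of false) ^ n *
    ((FreeGroup.of false * FreeGroup.of true) ^ n)⁻¹}

abbrev DihedralArtin (n : ℕ) := PresentedGroup (dihedralRel n)

namespace SemidirectProduct

variable {N G : Type*} [Group N] [Group G] {φ : G →* MulAut N}

theorem closure_image_inl_union_image_inr {S : Set N} (hS : Subgroup.closure S = ⊤) (T : Set G) :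
    Subgroup.closure (inl '' S ∪ inr '' T : Set (N ⋊[φ] G)) =
      (Subgroup.closure T).comap rightHom := by
  apply le_antisymm
  · rw [Subgroup.closure_le]
    rintro _ (⟨s, -, rfl⟩ | ⟨t, ht, rfl⟩)
    · simp
    · simpa using Subgroup.subset_closure ht
  · intro x hx
    have hl : inl x.left ∈ (Subgroup.closure S).map (inl : N →* N ⋊[φ] G) := by
      rw [hS]; exact Subgroup.mem_map_of_mem _ trivial
    have hr : inr x.right ∈ (Subgroup.closure T).map (inr : G →* N ⋊[φ] G) :=
      Subgroup.mem_map_of_mem _ hx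
    rw [MonoidHom.map_closure] at hl hr
    rw [← inl_left_mul_inr_right x]
    exact mul_mem (Subgroup.closure_mono Set.subset_union_left hl)
      (Subgroup.closure_mono Set.subset_union_right hr)

def comapRightHomEquivProd (K : Subgroup G) (hK : K ≤ φ.ker) :
    K.comap (rightHom : N ⋊[φ] G →* G) ≃* N × K where
  toFun x := (x.1.left, ⟨x.1.right, x.2⟩)
  invFun p := ⟨⟨p.1, p.2⟩, p.2.2⟩
  left_inv _ := rfl
  right_inv _ := rfl
  map_mul' x y := by
    have hx : φ x.1.right = 1 := hK x.2
    ext <;> simp [hx]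

end SemidirectProduct

namespace FreeGroup

def addLeftAut (α : Type*) [AddGroup α] : Multiplicative α →* MulAut (FreeGroup α) where
  toFun k := freeGroupCongr (Equiv.addLeft k.toAdd)
  map_one' := by
    rw [toAdd_one, Equiv.addLeft_zero, Equiv.Perm.one_def, freeGroupCongr_refl, MulAut.one_def]
  map_mul' k l := by
    rw [MulAut.mul_def, freeGroupCongr_trans, toAdd_mul, Equiv.addLeft_add, Equiv.Perm.mul_def]

theorem addLeftAut_apply_of {α : Type*} [AddGroup α] (k : Multiplicative α) (i : α) :
    addLeftAut α k (of i) = of (k.toAdd + i) := by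
  simp [addLeftAut]

end FreeGroup

theorem zpowersHom_ofAdd_injective {d : ℤ} (hd : d ≠ 0) :
    Function.Injective (zpowersHom (Multiplicative ℤ) (Multiplicative.ofAdd d)) := by
  intro k l hkl
  simp only [zpowersHom_apply, ← ofAdd_zsmul, smul_eq_mul, EmbeddingLike.apply_eq_iff_eq] at hkl
  exact Multiplicative.toAdd.injective (mul_right_cancel₀ hd hkl)

theorem zpow_mul_mul_inv_zpow_eq_of_modEq {G : Type*} [Group G] {x a : G} {n : ℕ}
    (h : Commute (x ^ n) a) {k l : ℤ} (hkl : k ≡ l [ZMOD n]) :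
    x ^ k * a * (x ^ k)⁻¹ = x ^ l * a * (x ^ l)⁻¹ := by
  obtain ⟨m, hm⟩ := hkl.dvd
  have hl : x ^ l = x ^ k * (x ^ n) ^ m := by
    rw [← zpow_natCast, ← zpow_mul, ← zpow_add, ← hm, add_sub_cancel]
  rw [hl, mul_inv_rev, mul_assoc (x ^ k) ((x ^ n) ^ m) a, (h.zpow_left m).eq]
  group

namespace DihedralArtin

variable (n : ℕ)

def a : DihedralArtin n := PresentedGroup.of true

def b : DihedralArtin n := PresentedGroup.of false

theorem commute_a_mul_b_pow_a : Commute ((a n * b n) ^ n) (a n) := by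
  have hrel : (a n * b n) ^ n = (b n * a n) ^ n :=
    mul_inv_eq_one.mp (PresentedGroup.one_of_mem (Set.mem_singleton _))
  rw [Commute, SemiconjBy, mul_pow_mul, hrel]

section lift

variable {n} {G : Type*} [Group G] {x y : G}

def lift (h : Commute (x ^ n) y) : DihedralArtin n →* G :=
  PresentedGroup.toGroup (f := fun s => if s then y else y⁻¹ * x) <| by
    rintro _ rfl
    have hconj : (y⁻¹ * x * y) ^ n = x ^ n := by
      calc (y⁻¹ * x * y) ^ n = y⁻¹ * x ^ n * y := by
            simpa using conj_pow (a := y⁻¹) (b := x)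
        _ = x ^ n := by rw [mul_assoc, h.eq, inv_mul_cancel_left]
    simp [hconj]

theorem lift_a (h : Commute (x ^ n) y) : lift h (a n) = y :=
  PresentedGroup.toGroup.of _

theorem lift_b (h : Commute (x ^ n) y) : lift h (b n) = y⁻¹ * x :=
  PresentedGroup.toGroup.of _

end lift

def castHom : Multiplicative ℤ →* Multiplicative (ZMod n) :=
  (Int.castAddHom (ZMod n)).toMultiplicative

theorem castHom_apply (k : Multiplicative ℤ) :
    castHom n k = Multiplicative.ofAdd (k.toAdd : ZMod n) := rfl

theorem ker_castHom : (castHom n).ker = Subgroup.zpowers (Multiplicative.ofAdd (n : ℤ)) := by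
  ext k
  rw [MonoidHom.mem_ker, Subgroup.mem_zpowers_iff, castHom_apply, ofAdd_eq_one,
    ZMod.intCast_zmod_eq_zero_iff_dvd]
  simp only [← ofAdd_zsmul, smul_eq_mul, mul_comm _ (n : ℤ), dvd_def, eq_comm (b := k)]
  rfl

abbrev Model := FreeGroup (ZMod n) ⋊[(FreeGroup.addLeftAut (ZMod n)).comp (castHom n)]
  Multiplicative ℤ

namespace Model

open SemidirectProduct

def shift : Model n := inr (Multiplicative.ofAdd 1)

def basis (i : ZMod n) : Model n := inl (FreeGroup.of i)

theorem shift_pow (k : ℕ) : shift n ^ k = inr (Multiplicative.ofAdd (k : ℤ)) := by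
  rw [shift, ← map_pow, ← ofAdd_nsmul, nsmul_one]

theorem shift_pow_mul_basis_mul_inv (k : ℕ) (i : ZMod n) :
    shift n ^ k * basis n i * (shift n ^ k)⁻¹ = basis n (k + i) := by
  rw [shift_pow, ← map_inv, basis, basis, ← inl_aut]
  simp only [MonoidHom.comp_apply, castHom_apply, FreeGroup.addLeftAut_apply_of, toAdd_ofAdd,
    Int.cast_natCast]

theorem commute_shift_pow_basis_zero : Commute (shift n ^ n) (basis n 0) := by
  have h := shift_pow_mul_basis_mul_inv n n 0
  rwa [ZMod.natCast_self, add_zero, mul_inv_eq_iff_eq_mul] at h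

section lift

variable {n} [NeZero n] {G : Type*} [Group G] {x y : G}

def lift (h : Commute (x ^ n) y) : Model n →* G :=
  SemidirectProduct.lift (FreeGroup.lift fun i => x ^ (i.val : ℤ) * y * (x ^ (i.val : ℤ))⁻¹)
    (zpowersHom G x) fun k => FreeGroup.ext_hom _ _ fun i => by
      have hmod : (((k.toAdd + i : ZMod n).val : ℤ)) ≡ k.toAdd + i.val [ZMOD n] :=
        (ZMod.intCast_eq_intCast_iff _ _ _).mp (by simp)
      simp only [MonoidHom.comp_apply, MulEquiv.coe_toMonoidHom, FreeGroup.addLeftAut_apply_of,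
        castHom_apply, toAdd_ofAdd, FreeGroup.lift_apply_of, MulAut.conj_apply, zpowersHom_apply]
      rw [zpow_mul_mul_inv_zpow_eq_of_modEq h hmod, zpow_add]
      group

theorem lift_basis (h : Commute (x ^ n) y) (i : ZMod n) :
    lift h (basis n i) = x ^ (i.val : ℤ) * y * (x ^ (i.val : ℤ))⁻¹ := by
  simp [lift, basis]

theorem lift_shift (h : Commute (x ^ n) y) : lift h (shift n) = x := by
  simp [lift, shift]

end lift

end Model

open SemidirectProduct

def toModel : DihedralArtin n →* Model n := lift (Model.commute_shift_pow_basis_zero n)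

theorem toModel_a_mul_b : toModel n (a n * b n) = Model.shift n := by
  rw [map_mul, toModel, lift_a, lift_b, mul_inv_cancel_left]

theorem toModel_injective [NeZero n] : Function.Injective (toModel n) := by
  let ofModel := Model.lift (commute_a_mul_b_pow_a n)
  have hleft : ofModel.comp (toModel n) = MonoidHom.id _ := by
    refine PresentedGroup.ext fun s => ?_
    have ha : ofModel (Model.basis n 0) = a n := by simp [ofModel, Model.lift_basis]
    cases s
    · show ofModel (toModel n (b n)) = b n
      rw [toModel, lift_b, map_mul, map_inv, ha, Model.lift_shift, inv_mul_cancel_left]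
    · show ofModel (toModel n (a n)) = a n
      rw [toModel, lift_a, ha]
  exact Function.LeftInverse.injective (g := ofModel) fun g => DFunLike.congr_fun hleft g

def generators : Set (DihedralArtin n) :=
  {(a n * b n) ^ n} ∪
    {g | ∃ i : ℕ, i < n ∧ g = (a n * b n) ^ i * a n * ((a n * b n) ^ i)⁻¹}

theorem image_toModel_generators [NeZero n] :
    toModel n '' generators n =
      inl '' Set.range FreeGroup.of ∪ inr '' {Multiplicative.ofAdd (n : ℤ)} := by
  have hconj (i : ℕ) :
      toModel n ((a n * b n) ^ i * a n * ((a n * b n) ^ i)⁻¹) = Model.basis n i := by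
    rw [map_mul, map_mul, map_inv, map_pow, toModel_a_mul_b, toModel, lift_a,
      Model.shift_pow_mul_basis_mul_inv, add_zero]
  rw [generators, Set.image_union, Set.union_comm, Set.image_singleton, Set.image_singleton,
    map_pow, toModel_a_mul_b, Model.shift_pow]
  congr 1
  ext g
  constructor
  · rintro ⟨_, ⟨i, -, rfl⟩, rfl⟩
    exact ⟨_, ⟨i, rfl⟩, (hconj i).symm⟩
  · rintro ⟨_, ⟨j, rfl⟩, rfl⟩
    refine ⟨_, ⟨j.val, j.val_lt, rfl⟩, ?_⟩
    rw [hconj, ZMod.natCast_zmod_val]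
    rfl

def toZMod : DihedralArtin n →* Multiplicative (ZMod n) :=
  (castHom n).comp (rightHom.comp (toModel n))

theorem map_toModel_closure_generators [NeZero n] :
    (Subgroup.closure (generators n)).map (toModel n) = (castHom n).ker.comap rightHom := by
  rw [MonoidHom.map_closure, image_toModel_generators,
    closure_image_inl_union_image_inr (FreeGroup.closure_range_of _),
    ← Subgroup.zpowers_eq_closure, ker_castHom]

theorem closure_generators_eq_ker [NeZero n] :
    Subgroup.closure (generators n) = (toZMod n).ker := by
  rw [← Subgroup.comap_map_eq_self_of_injective (toModel_injective n) (Subgroup.closure _),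
    map_toModel_closure_generators, Subgroup.comap_comap, MonoidHom.comap_ker]
  rfl

theorem toZMod_surjective [NeZero n] : Function.Surjective (toZMod n) := by
  intro z
  refine ⟨(a n * b n) ^ z.toAdd.val, ?_⟩
  rw [toZMod, MonoidHom.comp_apply, MonoidHom.comp_apply, map_pow, toModel_a_mul_b,
    Model.shift_pow, rightHom_inr, castHom_apply]
  simp

noncomputable def multiplicativeIntEquivKerCastHom [NeZero n] :
    Multiplicative ℤ ≃* (castHom n).ker :=
  (MonoidHom.ofInjective (zpowersHom_ofAdd_injective (NeZero.ne (n : ℤ)))).trans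
    (MulEquiv.subgroupCongr (ker_castHom n).symm)

noncomputable def closureGeneratorsEquiv [NeZero n] :
    Subgroup.closure (generators n) ≃* FreeGroup (Fin n) × Multiplicative ℤ :=
  ((Subgroup.equivMapOfInjective _ _ (toModel_injective n)).trans
    (MulEquiv.subgroupCongr (map_toModel_closure_generators n))).trans <|
  (comapRightHomEquivProd _
    (((castHom n).ker_le_comap _).trans (MonoidHom.comap_ker _ _).le)).trans <|
  MulEquiv.prodCongr (FreeGroup.freeGroupCongr (ZMod.finEquiv n).symm.toEquiv)
    (multiplicativeIntEquivKerCastHom n).symm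

end DihedralArtin

/-- `D_{2n}` contains a normal subgroup `N` of index `n` isomorphic to `𝔽_n × ℤ`, namely
`N = ⟨(ab)^n, a, (ab)a(ab)⁻¹, …, (ab)^{n-1} a (ab)^{-(n-1)}⟩`, with `D_{2n}/N ≅ C_n`. -/
theorem dihedralArtin_normal_subgroup (n : ℕ) (hn : 1 ≤ n) :
    ∃ N : Subgroup (DihedralArtin n),
      N = Subgroup.closure
          ({((PresentedGroup.of true : DihedralArtin n) * PresentedGroup.of false) ^ n} ∪
            {g : DihedralArtin n | ∃ i : ℕ, i < n ∧
              g = ((PresentedGroup.of true : DihedralArtin n) * PresentedGroup.of false) ^ i *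
                PresentedGroup.of true *
                (((PresentedGroup.of true : DihedralArtin n) * PresentedGroup.of false) ^ i)⁻¹}) ∧
      N.Normal ∧ N.index = n ∧
      Nonempty (N ≃* FreeGroup (Fin n) × Multiplicative ℤ) ∧
      ∃ π : DihedralArtin n →* Multiplicative (ZMod n),
        Function.Surjective π ∧ π.ker = N := by
  have : NeZero n := NeZero.of_pos hn
  have hker := DihedralArtin.closure_generators_eq_ker n
  refine ⟨Subgroup.closure (DihedralArtin.generators n), rfl, ?_, ?_,
    ⟨DihedralArtin.closureGeneratorsEquiv n⟩, DihedralArtin.toZMod n,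
    DihedralArtin.toZMod_surjective n, hker.symm⟩
  · rw [hker]
    exact MonoidHom.normal_ker _
  · rw [hker, Subgroup.index_ker, MonoidHom.range_eq_top_of_surjective _
      (DihedralArtin.toZMod_surjective n), Subgroup.card_top, Nat.card_congr Multiplicative.toAdd,
      Nat.card_zmod]
end

section
/- Let $A$ be a finitely generated free abelian group and $L, R \leq A$ be direct factors of $A$ such that $L \cap R$ and $\langle L, R \rangle = L + R$ are also direct factors of $A$. Then there exists a basis of $A$ of the form $\mu_1, \dots, \mu_m, \lambda_1, \dots, \lambda_l, \rho_1, \dots, \rho_r, \delta_1, \dots, \delta_d$ such that $L \cap R = \langle \mu_1, \dots, \mu_m \rangle$, $L = \langle \mu_1, \dots, \mu_m, \lambda_1, \dots, \lambda_l \rangle$ and $R = \langle \mu_1, \dots, \mu_m, \rho_1, \dots, \rho_r \rangle$. -/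
/-!
Choose complements `C` of `L ⊓ R` and `D` of `L ⊔ R`. By modularity of the submodule lattice,
`L = (L ⊓ R) ⊕ (L ⊓ C)`, `R = (L ⊓ R) ⊕ (R ⊓ C)`, and `(R ⊓ C) ⊕ D` is a complement of `L`.
Submodules of a finite free `ℤ`-module are free, so bases of `L ⊓ R`, `L ⊓ C`, `R ⊓ C` and `D`
concatenate to the required basis of `A`.
-/

open Submodule Set

section ModularLattice

variable {α : Type*} [Lattice α] [BoundedOrder α] [IsModularLattice α] {a b c d : α}

theorem IsCompl.sup_inf_eq_of_le (h : IsCompl b c) (hba : b ≤ a) : b ⊔ a ⊓ c = a := by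
  rw [inf_comm, ← sup_inf_assoc_of_le c hba, h.sup_eq_top, top_inf_eq]

theorem IsCompl.isCompl_inf_sup_of_isCompl_sup (hc : IsCompl (a ⊓ b) c) (hd : IsCompl (a ⊔ b) d) :
    IsCompl a (b ⊓ c ⊔ d) := by
  have hdisj : Disjoint a (b ⊓ c) := by
    rw [disjoint_iff, ← inf_assoc, hc.inf_eq_bot]
  have hsup : a ⊔ b ⊓ c = a ⊔ b := calc
    a ⊔ b ⊓ c = a ⊔ (a ⊓ b ⊔ b ⊓ c) := by rw [← sup_assoc, sup_inf_self]
    _ = a ⊔ b := by rw [hc.sup_inf_eq_of_le inf_le_right]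
  exact hdisj.isCompl_sup_right_of_isCompl_sup_left (hsup ▸ hd)

end ModularLattice

theorem LinearIndependent.sumElim_span_eq {R M ι κ : Type*} [Ring R] [AddCommGroup M]
    [Module R M] {v : ι → M} {w : κ → M} {S T : Submodule R M}
    (hv : LinearIndependent R v) (hw : LinearIndependent R w)
    (hvS : span R (range v) = S) (hwT : span R (range w) = T) (hST : Disjoint S T) :
    LinearIndependent R (Sum.elim v w) ∧ span R (range (Sum.elim v w)) = S ⊔ T := by
  refine ⟨hv.sum_type hw (hvS ▸ hwT ▸ hST), ?_⟩
  rw [Sum.elim_range, span_union, hvS, hwT]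

theorem Submodule.exists_linearIndependent_span_eq {R M : Type*} [CommRing R] [IsDomain R]
    [IsPrincipalIdealRing R] [AddCommGroup M] [Module R M] [Module.Free R M] [Module.Finite R M]
    (S : Submodule R M) :
    ∃ (n : ℕ) (v : Fin n → M), LinearIndependent R v ∧ span R (range v) = S := by
  obtain ⟨n, b⟩ := S.basisOfPid (Module.Free.chooseBasis R M)
  refine ⟨n, S.subtype ∘ b, b.linearIndependent.map' _ S.ker_subtype, ?_⟩
  rw [range_comp, ← map_span, b.span_eq, map_top, range_subtype]

theorem adapted_basis_of_direct_factors_general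
    {A : Type*} [AddCommGroup A] [Module ℤ A] [Module.Free ℤ A] [Module.Finite ℤ A]
    (L R : Submodule ℤ A)
    (hLR : ∃ C, IsCompl (L ⊓ R) C) (hsup : ∃ C, IsCompl (L ⊔ R) C) :
    ∃ (m l r d : ℕ) (b : Module.Basis ((Fin m ⊕ Fin l) ⊕ (Fin r ⊕ Fin d)) ℤ A),
      L ⊓ R = Submodule.span ℤ (Set.range fun i : Fin m => b (Sum.inl (Sum.inl i))) ∧
      L = Submodule.span ℤ
          ((Set.range fun i : Fin m => b (Sum.inl (Sum.inl i))) ∪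
            (Set.range fun i : Fin l => b (Sum.inl (Sum.inr i)))) ∧
      R = Submodule.span ℤ
          ((Set.range fun i : Fin m => b (Sum.inl (Sum.inl i))) ∪
            (Set.range fun i : Fin r => b (Sum.inr (Sum.inl i)))) := by
  obtain ⟨C, hC⟩ := hLR
  obtain ⟨D, hD⟩ := hsup
  obtain ⟨m, μ, hμ, spanμ⟩ := (L ⊓ R).exists_linearIndependent_span_eq
  obtain ⟨l, ν, hν, spanν⟩ := (L ⊓ C).exists_linearIndependent_span_eq
  obtain ⟨r, ρ, hρ, spanρ⟩ := (R ⊓ C).exists_linearIndependent_span_eq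
  obtain ⟨d, δ, hδ, spanδ⟩ := D.exists_linearIndependent_span_eq
  have hL : L ⊓ R ⊔ L ⊓ C = L := hC.sup_inf_eq_of_le inf_le_left
  have hR : L ⊓ R ⊔ R ⊓ C = R := hC.sup_inf_eq_of_le inf_le_right
  have hcompl := hC.isCompl_inf_sup_of_isCompl_sup hD
  obtain ⟨hμν, spanμν⟩ :=
    hμ.sumElim_span_eq hν spanμ spanν (hC.disjoint.mono_right inf_le_right)
  obtain ⟨hρδ, spanρδ⟩ := hρ.sumElim_span_eq hδ spanρ spanδ
    (hD.disjoint.mono_left (inf_le_left.trans le_sup_right))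
  obtain ⟨hli, hspan⟩ := hμν.sumElim_span_eq hρδ (spanμν.trans hL) spanρδ hcompl.disjoint
  refine ⟨m, l, r, d, Module.Basis.mk hli (hspan.trans hcompl.sup_eq_top).ge, ?_, ?_, ?_⟩ <;>
    simp only [Module.Basis.mk_apply, Sum.elim_inl, Sum.elim_inr, span_union]
  · exact spanμ.symm
  · rw [spanμ, spanν, hL]
  · rw [spanμ, spanρ, hR]

/-- Let `A` be a finitely generated free abelian group and `L, R ≤ A` direct factors
such that `L ⊓ R` and `L + R` are also direct factors. Then `A` has a basis
`μ₁,…,μ_m, λ₁,…,λ_l, ρ₁,…,ρ_r, δ₁,…,δ_d` with `L ⊓ R = ⟨μ⟩`, `L = ⟨μ, λ⟩` and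
`R = ⟨μ, ρ⟩`. -/
theorem adapted_basis_of_direct_factors
    {A : Type*} [AddCommGroup A] [Module ℤ A] [Module.Free ℤ A] [Module.Finite ℤ A]
    (L R : Submodule ℤ A)
    (hL : ∃ C, IsCompl L C) (hR : ∃ C, IsCompl R C)
    (hLR : ∃ C, IsCompl (L ⊓ R) C) (hsup : ∃ C, IsCompl (L ⊔ R) C) :
    ∃ (m l r d : ℕ) (b : Module.Basis ((Fin m ⊕ Fin l) ⊕ (Fin r ⊕ Fin d)) ℤ A),
      L ⊓ R = Submodule.span ℤ (Set.range fun i : Fin m => b (Sum.inl (Sum.inl i))) ∧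
      L = Submodule.span ℤ
          ((Set.range fun i : Fin m => b (Sum.inl (Sum.inl i))) ∪
            (Set.range fun i : Fin l => b (Sum.inl (Sum.inr i)))) ∧
      R = Submodule.span ℤ
          ((Set.range fun i : Fin m => b (Sum.inl (Sum.inl i))) ∪
            (Set.range fun i : Fin r => b (Sum.inr (Sum.inl i)))) :=
  adapted_basis_of_direct_factors_general L R hLR hsup
end
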